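/- For every monotone normalized submodular function f : Finset α → ℝ, every matroid M on α, and every finite stream π = (e₁, …, e_m) of distinct elements, the output S of the Swapping algorithm on π satisfies f(T) ≤ 4·f(S) for every set T of streamed elements that is independent in M; i.e., Swapping is a deterministic 4-approximation to the best offline independent subset of the streamed elements. -/

import Mathlib

open Finset

attribute [local instance] Classical.propDecidable

universe u

/-- A matroid on a ground set `α`, given as a nonempty, downward closed family of
finite independent sets satisfying the augmentation property. -/
structure MatroidOn (α : Type u) where
  Indep : Finset α → Prop
  nonempty : ∃ A, Indep A
  subset_indep : ∀ ⦃A B : Finset α⦄, A ⊆ B → Indep B → Indep A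
  augment : ∀ ⦃A B : Finset α⦄, Indep A → Indep B → A.card < B.card →
    ∃ e ∈ B, e ∉ A ∧ Indep (insert e A)

/-- Submodularity of a set function. -/
def SubmodularFn {α : Type u} [DecidableEq α] (f : Finset α → ℝ) : Prop :=
  ∀ X Y : Finset α, X ⊆ Y → ∀ e, e ∉ Y →
    f (insert e Y) - f Y ≤ f (insert e X) - f X

/-- Monotonicity of a set function. -/
def MonotoneFn {α : Type u} (f : Finset α → ℝ) : Prop :=
  ∀ X Y : Finset α, X ⊆ Y → f X ≤ f Y

variable {α : Type u} [DecidableEq α]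

/-- The marginal gain `f(e | T) = f (T ∪ {e}) - f T`. -/
def marg (f : Finset α → ℝ) (T : Finset α) (e : α) : ℝ := f (insert e T) - f T

/-- State of the `Swapping` algorithm: the current solution `S`, the set `S'` of all
elements ever added to the solution, and the weights `w` assigned so far. -/
structure SwapState (α : Type u) where
  S : Finset α
  S' : Finset α
  w : α → ℝ

/-- Initial state of the `Swapping` algorithm. -/
def SwapState.start (α : Type u) : SwapState α := ⟨∅, ∅, fun _ => 0⟩

/-- One step of the `Swapping` algorithm, processing the arriving element `e`.
The arriving element always receives weight `w e = f(e | S')`. Ties in the choice of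
the minimum-weight swap candidate may be broken arbitrarily. -/
inductive SwapStep (f : Finset α → ℝ) (M : MatroidOn α) :
    SwapState α → α → SwapState α → Prop
  | add {st : SwapState α} {e : α} (hind : M.Indep (insert e st.S)) :
      SwapStep f M st e
        ⟨insert e st.S, insert e st.S', Function.update st.w e (marg f st.S' e)⟩
  | swap {st : SwapState α} {e y : α} (hdep : ¬ M.Indep (insert e st.S))
      (hy : y ∈ st.S) (hyind : M.Indep (insert e (st.S.erase y)))
      (hmin : ∀ z ∈ st.S, M.Indep (insert e (st.S.erase z)) → st.w y ≤ st.w z)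
      (hgain : 2 * st.w y < marg f st.S' e) :
      SwapStep f M st e
        ⟨insert e (st.S.erase y), insert e st.S', Function.update st.w e (marg f st.S' e)⟩
  | discardLow {st : SwapState α} {e y : α} (hdep : ¬ M.Indep (insert e st.S))
      (hy : y ∈ st.S) (hyind : M.Indep (insert e (st.S.erase y)))
      (hmin : ∀ z ∈ st.S, M.Indep (insert e (st.S.erase z)) → st.w y ≤ st.w z)
      (hgain : ¬ 2 * st.w y < marg f st.S' e) :
      SwapStep f M st e ⟨st.S, st.S', Function.update st.w e (marg f st.S' e)⟩
  | discardNone {st : SwapState α} {e : α} (hdep : ¬ M.Indep (insert e st.S))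
      (h : ∀ y ∈ st.S, ¬ M.Indep (insert e (st.S.erase y))) :
      SwapStep f M st e ⟨st.S, st.S', Function.update st.w e (marg f st.S' e)⟩

/-- Run of the `Swapping` algorithm from a given state, processing the stream in order. -/
inductive SwapRunFrom (f : Finset α → ℝ) (M : MatroidOn α) :
    SwapState α → List α → SwapState α → Prop
  | nil (st : SwapState α) : SwapRunFrom f M st [] st
  | cons {st st₁ st₂ : SwapState α} {e : α} {π : List α}
      (hstep : SwapStep f M st e st₁) (hrest : SwapRunFrom f M st₁ π st₂) :
      SwapRunFrom f M st (e :: π) st₂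

/-- `SwapRun f M π st` holds iff some run of the `Swapping` algorithm on the stream `π`
terminates in state `st`. -/
def SwapRun (f : Finset α → ℝ) (M : MatroidOn α) (π : List α) (st : SwapState α) : Prop :=
  SwapRunFrom f M (SwapState.start α) π st

namespace MatroidOn

variable {α : Type u} [DecidableEq α] {M : MatroidOn α}

lemma empty_indep (M : MatroidOn α) : M.Indep ∅ := by
  obtain ⟨A, hA⟩ := M.nonempty
  exact M.subset_indep (Finset.empty_subset A) hA

lemma augment' {A B : Finset α} (hA : M.Indep A) (hB : M.Indep B)
    (h : A.card < B.card) : ∃ e ∈ B, e ∉ A ∧ M.Indep (insert e A) := by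
  obtain ⟨e, he, heA, hind⟩ := M.augment hA hB h
  refine ⟨e, he, heA, ?_⟩
  convert hind using 2
  congr 1
  funext a b
  exact Subsingleton.elim _ _

/-- Maximal independent subset of `X`. -/
def IsBasisOf (M : MatroidOn α) (I X : Finset α) : Prop :=
  I ⊆ X ∧ M.Indep I ∧ ∀ e ∈ X, M.Indep (insert e I) → e ∈ I

lemma exists_basis_extending_aux :
    ∀ n (I X : Finset α), (X \ I).card ≤ n → M.Indep I → I ⊆ X →
      ∃ J, M.IsBasisOf J X ∧ I ⊆ J := by
  intro n
  induction n with
  | zero =>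
    intro I X hc hI hIX
    refine ⟨I, ⟨hIX, hI, fun e he _ => ?_⟩, subset_rfl⟩
    by_contra heI
    have : e ∈ X \ I := mem_sdiff.2 ⟨he, heI⟩
    simp only [Nat.le_zero, card_eq_zero] at hc
    simp [hc] at this
  | succ n ih =>
    intro I X hc hI hIX
    by_cases h : ∀ e ∈ X, M.Indep (insert e I) → e ∈ I
    · exact ⟨I, ⟨hIX, hI, h⟩, subset_rfl⟩
    · push_neg at h
      obtain ⟨e, heX, hind, heI⟩ := h
      have hsub : insert e I ⊆ X := insert_subset heX hIX
      have hcard : (X \ insert e I).card ≤ n := by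
        have hmem : e ∈ X \ I := mem_sdiff.2 ⟨heX, heI⟩
        have h2 : (X \ insert e I) = (X \ I).erase e := by
          rw [Finset.sdiff_insert]
        rw [h2, card_erase_of_mem hmem]
        omega
      obtain ⟨J, hJ, hIJ⟩ := ih (insert e I) X hcard hind hsub
      exact ⟨J, hJ, (subset_insert e I).trans hIJ⟩

lemma exists_basis_extending {I X : Finset α} (hI : M.Indep I) (hIX : I ⊆ X) :
    ∃ J, M.IsBasisOf J X ∧ I ⊆ J :=
  exists_basis_extending_aux (X \ I).card I X le_rfl hI hIX

lemma card_le_basis {I J X : Finset α} (hI : M.IsBasisOf I X) (hJ : M.Indep J)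
    (hJX : J ⊆ X) : J.card ≤ I.card := by
  by_contra h
  push_neg at h
  obtain ⟨g, hgJ, hgI, hgind⟩ := augment' hI.2.1 hJ h
  exact hgI (hI.2.2 g (hJX hgJ) hgind)

lemma basis_card_eq {I J X : Finset α} (hI : M.IsBasisOf I X) (hJ : M.IsBasisOf J X) :
    I.card = J.card :=
  le_antisymm (card_le_basis hJ hI.2.1 hI.1) (card_le_basis hI hJ.2.1 hJ.1)

lemma exchange_key {S K : Finset α} {e : α}
    (hS : M.Indep S) (heS : e ∉ S) (hdep : ¬ M.Indep (insert e S))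
    (hK : M.Indep K) (heK : e ∈ K) (hKS : K ⊆ insert e S) :
    ∃ z ∈ S, z ∉ K ∧ M.Indep (insert e (S.erase z)) := by
  obtain ⟨J, hJ, hKJ⟩ := exists_basis_extending hK hKS
  have hSJ : S.card ≤ J.card := card_le_basis hJ hS (subset_insert e S)
  have hJne : J ≠ insert e S := fun h => hdep (h ▸ hJ.2.1)
  have h1 : J.card ≤ S.card + 1 := by
    have h := card_le_card hJ.1
    rwa [card_insert_of_notMem heS] at h
  have h2 : J.card ≠ S.card + 1 := by
    intro hh
    exact hJne (Finset.eq_of_subset_of_card_le hJ.1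
      (by rw [card_insert_of_notMem heS]; omega))
  have hJcard : J.card = S.card := by omega
  have hsd : ((insert e S) \ J).card = 1 := by
    rw [card_sdiff_of_subset hJ.1, card_insert_of_notMem heS, hJcard]
    omega
  obtain ⟨z, hz⟩ := card_eq_one.1 hsd
  have hzmem : z ∈ insert e S ∧ z ∉ J := by
    have : z ∈ (insert e S) \ J := by rw [hz]; exact mem_singleton_self z
    exact ⟨(mem_sdiff.1 this).1, (mem_sdiff.1 this).2⟩
  have hze : z ≠ e := fun h => hzmem.2 (h ▸ hKJ heK)
  have hzS : z ∈ S := by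
    rcases mem_insert.1 hzmem.1 with h | h
    · exact absurd h hze
    · exact h
  have hJeq : J = insert e (S.erase z) := by
    apply Finset.eq_of_subset_of_card_le
    · intro x hxJ
      have hx : x ∈ insert e S := hJ.1 hxJ
      have hxz : x ≠ z := fun h => hzmem.2 (h ▸ hxJ)
      rcases mem_insert.1 hx with h | h
      · simp [h]
      · exact mem_insert_of_mem (mem_erase.2 ⟨hxz, h⟩)
    · rw [card_insert_of_notMem (fun h => heS (erase_subset z S h)),
        card_erase_of_mem hzS, hJcard]
      have : 1 ≤ S.card := card_pos.2 ⟨z, hzS⟩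
      omega
  exact ⟨z, hzS, fun h => hzmem.2 (hKJ h), hJeq ▸ hJ.2.1⟩

lemma exists_swap {S : Finset α} {e : α} (hS : M.Indep S) (he : M.Indep {e}) (heS : e ∉ S)
    (hdep : ¬ M.Indep (insert e S)) : ∃ z ∈ S, M.Indep (insert e (S.erase z)) := by
  obtain ⟨z, hzS, _, hzi⟩ := exchange_key hS heS hdep he (mem_singleton_self e)
    (by intro x hx; rw [mem_singleton] at hx; exact hx ▸ mem_insert_self e S)
  exact ⟨z, hzS, hzi⟩

lemma circuit_dep {S : Finset α} {e : α} (hS : M.Indep S) (heS : e ∉ S)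
    (hdep : ¬ M.Indep (insert e S)) :
    ¬ M.Indep (insert e (S.filter (fun z => M.Indep (insert e (S.erase z))))) := by
  intro hind
  obtain ⟨z, hzS, hzK, hzi⟩ := exchange_key hS heS hdep hind (mem_insert_self e _)
    (insert_subset_insert e (filter_subset _ S))
  exact hzK (mem_insert_of_mem (mem_filter.2 ⟨hzS, hzi⟩))

lemma dep_insert_basis {U A I : Finset α} {e : α} (hI : M.IsBasisOf I U)
    (hAU : A ⊆ U) (hA : M.Indep A) (heU : e ∉ U) (hdep : ¬ M.Indep (insert e A)) :
    ¬ M.Indep (insert e I) := by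
  intro hind
  obtain ⟨A', hA', hAA'⟩ := exists_basis_extending hA hAU
  have hcard : A'.card = I.card := basis_card_eq hA' hI
  have heI : e ∉ I := fun h => heU (hI.1 h)
  obtain ⟨g, hgmem, hgA', hgind⟩ := augment' hA'.2.1 hind
    (by rw [card_insert_of_notMem heI]; omega)
  rcases mem_insert.1 hgmem with rfl | hgI
  · exact hdep (M.subset_indep (insert_subset_insert g hAA') hgind)
  · exact hgA' (hA'.2.2 g (hI.1 hgI) hgind)

lemma exists_representatives {S R : Finset α} (hS : M.Indep S) (hR : M.Indep R)
    (hdisj : ∀ e ∈ R, e ∉ S) (hdep : ∀ e ∈ R, ¬ M.Indep (insert e S)) :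
    ∃ φ : α → α, Set.InjOn φ ↑R ∧
      ∀ e ∈ R, φ e ∈ S ∧ M.Indep (insert e (S.erase (φ e))) := by
  classical
  set C : α → Finset α := fun e => S.filter (fun z => M.Indep (insert e (S.erase z)))
    with hCdef
  have hCsub : ∀ e, C e ⊆ S := fun e => filter_subset _ S
  have hcond : ∀ s : Finset {x // x ∈ R}, s.card ≤ (s.biUnion (fun e => C e.1)).card := by
    intro s
    set U : Finset α := s.biUnion (fun e => C e.1) with hU
    have hUS : U ⊆ S := by
      intro x hx
      obtain ⟨e, _, hxe⟩ := mem_biUnion.1 hx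
      exact hCsub e.1 hxe
    obtain ⟨I, hI, -⟩ := exists_basis_extending M.empty_indep (empty_subset U)
    set R₀ : Finset α := s.image Subtype.val with hR₀
    have hR₀R : R₀ ⊆ R := by
      intro x hx
      obtain ⟨e, _, rfl⟩ := mem_image.1 hx
      exact e.2
    have hdepI : ∀ x ∈ R₀, ¬ M.Indep (insert x I) := by
      intro x hxR₀
      obtain ⟨e, hes, rfl⟩ := mem_image.1 hxR₀
      have heR : e.1 ∈ R := e.2
      have hed : ¬ M.Indep (insert e.1 (C e.1)) :=
        circuit_dep hS (hdisj _ heR) (hdep _ heR)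
      have hCU : C e.1 ⊆ U := by
        intro x hx; rw [hU, mem_biUnion]; exact ⟨e, hes, hx⟩
      exact dep_insert_basis hI hCU (M.subset_indep (hCsub e.1) hS)
        (fun h => hdisj _ heR (hUS h)) hed
    have hIbig : M.IsBasisOf I (U ∪ R₀) := by
      refine ⟨hI.1.trans subset_union_left, hI.2.1, fun x hx hind => ?_⟩
      rcases mem_union.1 hx with hxU | hxR₀
      · exact hI.2.2 x hxU hind
      · exact absurd hind (hdepI x hxR₀)
    obtain ⟨B, hB, hR₀B⟩ := exists_basis_extending (M.subset_indep hR₀R hR)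
      (subset_union_right : R₀ ⊆ U ∪ R₀)
    have h1 : R₀.card ≤ B.card := card_le_card hR₀B
    have h2 : B.card = I.card := basis_card_eq hB hIbig
    have h3 : I.card ≤ U.card := card_le_card hI.1
    have h4 : s.card = R₀.card := (card_image_of_injective s Subtype.val_injective).symm
    omega
  obtain ⟨g, hginj, hgmem⟩ :=
    (Finset.all_card_le_biUnion_card_iff_existsInjective' (fun e : {x // x ∈ R} => C e.1)).1
      hcond
  refine ⟨fun x => if h : x ∈ R then g ⟨x, h⟩ else x, ?_, ?_⟩
  · intro x hx y hy hxy
    simp only [Finset.mem_coe] at hx hy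
    simp only [dif_pos hx, dif_pos hy] at hxy
    exact Subtype.mk.injEq x hx y hy ▸ congrArg Subtype.val (hginj hxy)
  · intro e he
    have := hgmem ⟨e, he⟩
    rw [hCdef] at this
    simp only [mem_filter] at this
    simp only [dif_pos he]
    exact this

end MatroidOn

section SwapLemmas

set_option linter.unusedSectionVars false

variable {f : Finset α → ℝ} {M : MatroidOn α}

lemma marg_nonneg (hmono : MonotoneFn f) (T : Finset α) (e : α) : 0 ≤ marg f T e :=
  sub_nonneg.2 (hmono _ _ (subset_insert e T))

lemma sum_update_not_mem {A : Finset α} (w : α → ℝ) {e : α} (m : ℝ) (he : e ∉ A) :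
    ∑ z ∈ A, Function.update w e m z = ∑ z ∈ A, w z :=
  Finset.sum_congr rfl fun z hz => Function.update_of_ne (fun h => he (by rwa [h] at hz)) m w

/-- The main running invariant of the algorithm. -/
structure SwapInv (f : Finset α → ℝ) (M : MatroidOn α) (P : Finset α)
    (st : SwapState α) : Prop where
  indep : M.Indep st.S
  sub : st.S ⊆ st.S'
  subP : st.S' ⊆ P
  wnn : ∀ z, 0 ≤ st.w z
  weq : f st.S' = ∑ z ∈ st.S', st.w z
  half : ∑ z ∈ st.S', st.w z ≤ 2 * ∑ z ∈ st.S, st.w z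
  lower : ∀ A ⊆ st.S', ∑ z ∈ A, st.w z ≤ f A

lemma lower_step (hsub : SubmodularFn f) {S' : Finset α} {w : α → ℝ} {e : α}
    (heS' : e ∉ S') (hlow : ∀ A ⊆ S', ∑ z ∈ A, w z ≤ f A) :
    ∀ A ⊆ insert e S', ∑ z ∈ A, Function.update w e (marg f S' e) z ≤ f A := by
  intro A hA
  by_cases heA : e ∈ A
  · have h1 : A.erase e ⊆ S' := by
      intro x hx
      rcases mem_insert.1 (hA (erase_subset e A hx)) with h | h
      · exact absurd h (mem_erase.1 hx).1
      · exact h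
    have h2 : f (insert e S') - f S' ≤ f (insert e (A.erase e)) - f (A.erase e) :=
      hsub (A.erase e) S' h1 e heS'
    rw [insert_erase heA] at h2
    have h3 : ∑ z ∈ A.erase e, Function.update w e (marg f S' e) z ≤ f (A.erase e) := by
      rw [sum_update_not_mem w _ (notMem_erase e A)]
      exact hlow _ h1
    rw [← insert_erase heA, sum_insert (notMem_erase e A), Function.update_self,
      sum_update_not_mem w _ (notMem_erase e A), insert_erase heA]
    have h4 := hlow _ h1
    simp only [marg]
    linarith
  · have h1 : A ⊆ S' := by
      intro x hx
      rcases mem_insert.1 (hA hx) with h | h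
      · rw [h] at hx; exact absurd hx heA
      · exact h
    rw [sum_update_not_mem w _ (fun h => heA h)]
    exact hlow _ h1

lemma inv_step (hmono : MonotoneFn f) (hsub : SubmodularFn f) {P : Finset α}
    {st st₁ : SwapState α} {e : α} (hstep : SwapStep f M st e st₁)
    (hinv : SwapInv f M P st) (he : e ∉ P) : SwapInv f M (insert e P) st₁ := by
  have heS' : e ∉ st.S' := fun h => he (hinv.subP h)
  have heS : e ∉ st.S := fun h => heS' (hinv.sub h)
  have hm : 0 ≤ marg f st.S' e := marg_nonneg hmono _ _
  cases hstep with
  | add hind =>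
    refine ⟨hind, insert_subset_insert e hinv.sub, insert_subset_insert e hinv.subP,
      ?_, ?_, ?_, lower_step hsub heS' hinv.lower⟩
    · intro z
      dsimp only
      by_cases hz : z = e
      · subst hz; rw [Function.update_self]; exact hm
      · rw [Function.update_of_ne hz]; exact hinv.wnn z
    · show f (insert e st.S') = ∑ z ∈ insert e st.S', Function.update st.w e (marg f st.S' e) z
      rw [sum_insert heS', Function.update_self, sum_update_not_mem st.w _ heS',
        ← hinv.weq]
      simp only [marg]; ring
    · show ∑ z ∈ insert e st.S', Function.update st.w e (marg f st.S' e) z ≤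
        2 * ∑ z ∈ insert e st.S, Function.update st.w e (marg f st.S' e) z
      rw [sum_insert heS', Function.update_self, sum_update_not_mem st.w _ heS',
        sum_insert heS, Function.update_self, sum_update_not_mem st.w _ heS]
      have := hinv.half
      linarith
  | @swap y hdep hy hyind hmin hgain =>
    have heSe : e ∉ st.S.erase y := fun h => heS (erase_subset y st.S h)
    refine ⟨hyind, insert_subset_insert e ((erase_subset y st.S).trans hinv.sub),
      insert_subset_insert e hinv.subP, ?_, ?_, ?_, lower_step hsub heS' hinv.lower⟩
    · intro z
      dsimp only
      by_cases hz : z = e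
      · subst hz; rw [Function.update_self]; exact hm
      · rw [Function.update_of_ne hz]; exact hinv.wnn z
    · show f (insert e st.S') = ∑ z ∈ insert e st.S', Function.update st.w e (marg f st.S' e) z
      rw [sum_insert heS', Function.update_self, sum_update_not_mem st.w _ heS',
        ← hinv.weq]
      simp only [marg]; ring
    · show ∑ z ∈ insert e st.S', Function.update st.w e (marg f st.S' e) z ≤
        2 * ∑ z ∈ insert e (st.S.erase y), Function.update st.w e (marg f st.S' e) z
      rw [sum_insert heS', Function.update_self, sum_update_not_mem st.w _ heS',
        sum_insert heSe, Function.update_self, sum_update_not_mem st.w _ heSe]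
      have h1 := hinv.half
      have h2 := hinv.wnn y
      have h3 := Finset.add_sum_erase st.S st.w hy
      linarith
  | @discardLow y hdep hy hyind hmin hgain =>
    refine ⟨hinv.indep, hinv.sub, hinv.subP.trans (subset_insert e P), ?_, ?_, ?_, ?_⟩
    · intro z
      dsimp only
      by_cases hz : z = e
      · subst hz; rw [Function.update_self]; exact hm
      · rw [Function.update_of_ne hz]; exact hinv.wnn z
    · show f st.S' = ∑ z ∈ st.S', Function.update st.w e (marg f st.S' e) z
      rw [sum_update_not_mem st.w _ heS']; exact hinv.weq
    · show ∑ z ∈ st.S', Function.update st.w e (marg f st.S' e) z ≤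
        2 * ∑ z ∈ st.S, Function.update st.w e (marg f st.S' e) z
      rw [sum_update_not_mem st.w _ heS', sum_update_not_mem st.w _ heS]
      exact hinv.half
    · intro A hA
      show ∑ z ∈ A, Function.update st.w e (marg f st.S' e) z ≤ f A
      rw [sum_update_not_mem st.w _ (fun h => heS' (hA h))]
      exact hinv.lower A hA
  | discardNone hdep hnone =>
    refine ⟨hinv.indep, hinv.sub, hinv.subP.trans (subset_insert e P), ?_, ?_, ?_, ?_⟩
    · intro z
      dsimp only
      by_cases hz : z = e
      · subst hz; rw [Function.update_self]; exact hm
      · rw [Function.update_of_ne hz]; exact hinv.wnn z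
    · show f st.S' = ∑ z ∈ st.S', Function.update st.w e (marg f st.S' e) z
      rw [sum_update_not_mem st.w _ heS']; exact hinv.weq
    · show ∑ z ∈ st.S', Function.update st.w e (marg f st.S' e) z ≤
        2 * ∑ z ∈ st.S, Function.update st.w e (marg f st.S' e) z
      rw [sum_update_not_mem st.w _ heS', sum_update_not_mem st.w _ heS]
      exact hinv.half
    · intro A hA
      show ∑ z ∈ A, Function.update st.w e (marg f st.S' e) z ≤ f A
      rw [sum_update_not_mem st.w _ (fun h => heS' (hA h))]
      exact hinv.lower A hA

lemma step_S'_mono {st st₁ : SwapState α} {e : α} (hstep : SwapStep f M st e st₁) :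
    st.S' ⊆ st₁.S' := by
  cases hstep with
  | add hind => exact subset_insert _ _
  | swap hdep hy hyind hmin hgain => exact subset_insert _ _
  | discardLow hdep hy hyind hmin hgain => exact subset_rfl
  | discardNone hdep hnone => exact subset_rfl

lemma step_w_eq {st st₁ : SwapState α} {x : α} (hstep : SwapStep f M st x st₁) {e : α}
    (h : e ≠ x) : st₁.w e = st.w e := by
  cases hstep <;> exact Function.update_of_ne h _ _

lemma run_S'_mono : ∀ {st π st₂}, SwapRunFrom f M st π st₂ → st.S' ⊆ st₂.S' := by
  intro st π st₂ hrun
  induction hrun with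
  | nil st => exact subset_rfl
  | cons hstep hrest ih => exact (step_S'_mono hstep).trans ih

lemma run_w_eq : ∀ {st π st₂}, SwapRunFrom f M st π st₂ → ∀ {x}, x ∉ π →
    st₂.w x = st.w x := by
  intro st π st₂ hrun
  induction hrun with
  | nil st => intro x _; rfl
  | @cons st st₁ st₂ e π hstep hrest ih =>
    intro x hx
    rw [List.mem_cons, not_or] at hx
    rw [ih hx.2, step_w_eq hstep hx.1]

lemma inv_run (hmono : MonotoneFn f) (hsub : SubmodularFn f) :
    ∀ {st π st₂}, SwapRunFrom f M st π st₂ → ∀ P, SwapInv f M P st →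
      (∀ x ∈ π, x ∉ P) → π.Nodup → SwapInv f M (P ∪ π.toFinset) st₂ := by
  intro st π st₂ hrun
  induction hrun with
  | nil st => intro P hinv _ _; simpa using hinv
  | @cons st st₁ st₂ e π hstep hrest ih =>
    intro P hinv hfresh hnodup
    rw [List.nodup_cons] at hnodup
    have h1 := inv_step hmono hsub hstep hinv (hfresh e (List.mem_cons_self))
    have h2 := ih (insert e P) h1
      (fun x hx => by
        rw [Finset.mem_insert, not_or]
        exact ⟨fun h => hnodup.1 (h ▸ hx), hfresh x (List.mem_cons_of_mem e hx)⟩)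
      hnodup.2
    have h3 : insert e P ∪ π.toFinset = P ∪ (e :: π).toFinset := by
      rw [List.toFinset_cons, Finset.insert_union, Finset.union_insert]
    exact h3 ▸ h2

/-- The per-rejected-element invariant. -/
def Qe (f : Finset α → ℝ) (M : MatroidOn α) (e : α) (st : SwapState α) : Prop :=
  e ∉ st.S' ∧ ¬ M.Indep (insert e st.S) ∧
    ∀ z ∈ st.S, M.Indep (insert e (st.S.erase z)) → st.w e ≤ 2 * st.w z

lemma Qe_step {P : Finset α} {st st₁ : SwapState α} {x e : α}
    (hstep : SwapStep f M st x st₁) (hinv : SwapInv f M P st)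
    (hx : x ∉ P) (hne : e ≠ x) (hq : Qe f M e st) : Qe f M e st₁ := by
  obtain ⟨heS', hdepe, hbound⟩ := hq
  have heS : e ∉ st.S := fun h => heS' (hinv.sub h)
  have hxS' : x ∉ st.S' := fun h => hx (hinv.subP h)
  have hxS : x ∉ st.S := fun h => hxS' (hinv.sub h)
  cases hstep with
  | add hind =>
    refine ⟨?_, ?_, ?_⟩
    · intro h
      rcases mem_insert.1 h with h | h
      · exact hne h
      · exact heS' h
    · intro h
      exact hdepe (M.subset_indep (insert_subset_insert e (subset_insert x st.S)) h)
    · intro z hz hind2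
      rcases mem_insert.1 hz with rfl | hzS
      · exfalso
        rw [Finset.erase_insert hxS] at hind2
        exact hdepe hind2
      · have hzx : z ≠ x := fun h => hxS (h ▸ hzS)
        have hsub2 : M.Indep (insert e (st.S.erase z)) := by
          apply M.subset_indep _ hind2
          apply insert_subset_insert
          intro u hu
          exact mem_erase.2 ⟨(mem_erase.1 hu).1, mem_insert_of_mem (mem_erase.1 hu).2⟩
        show Function.update st.w x _ e ≤ 2 * Function.update st.w x _ z
        rw [Function.update_of_ne hne, Function.update_of_ne hzx]
        exact hbound z hzS hsub2
  | @swap y hdep hy hyind hmin hgain =>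
    have hxSe : x ∉ st.S.erase y := fun h => hxS (erase_subset y st.S h)
    have hy1 : 1 ≤ st.S.card := card_pos.2 ⟨y, hy⟩
    refine ⟨?_, ?_, ?_⟩
    · intro h
      rcases mem_insert.1 h with h | h
      · exact hne h
      · exact heS' h
    · -- dependence is preserved by a swap
      intro hJ
      have hcard : st.S.card < (insert e (insert x (st.S.erase y))).card := by
        rw [card_insert_of_notMem, card_insert_of_notMem hxSe, card_erase_of_mem hy]
        · omega
        · intro h
          rcases mem_insert.1 h with h | h
          · exact hne h
          · exact heS (erase_subset y st.S h)
      obtain ⟨g, hg, hgS, hgind⟩ := MatroidOn.augment' hinv.indep hJ hcard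
      rcases mem_insert.1 hg with rfl | hg2
      · exact hdepe hgind
      rcases mem_insert.1 hg2 with rfl | hg3
      · exact hdep hgind
      · exact hgS (erase_subset y st.S hg3)
    · intro z hz hind2
      show Function.update st.w x _ e ≤ 2 * Function.update st.w x _ z
      rw [Function.update_of_ne hne]
      rcases mem_insert.1 hz with rfl | hzE
      · -- z = x : then e with S.erase y is independent, use the bound on y
        rw [Function.update_self]
        rw [Finset.erase_insert hxSe] at hind2
        have h1 : st.w e ≤ 2 * st.w y := hbound y hy hind2
        have h2 : 0 ≤ st.w y := hinv.wnn y
        linarith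
      · have hzS : z ∈ st.S := erase_subset y st.S hzE
        have hzy : z ≠ y := (mem_erase.1 hzE).1
        have hzx : z ≠ x := fun h => hxS (h ▸ hzS)
        have h2card : 1 < st.S.card := Finset.one_lt_card.2 ⟨z, hzS, y, hy, hzy⟩
        rw [Function.update_of_ne hzx]
        by_cases hc : M.Indep (insert e (st.S.erase z))
        · exact hbound z hzS hc
        · -- the hard case: two augmentation arguments
          rw [Finset.erase_insert_of_ne hzx.symm] at hind2
          -- hind2 : M.Indep (insert e (insert x ((st.S.erase y).erase z)))
          have hzE' : z ∈ st.S.erase y := hzE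
          have heE : e ∉ (st.S.erase y).erase z :=
            fun h => heS (erase_subset y st.S (erase_subset z _ h))
          have hxE2 : x ∉ (st.S.erase y).erase z :=
            fun h => hxS (erase_subset y st.S (erase_subset z _ h))
          have hLind : M.Indep (insert e ((st.S.erase y).erase z)) :=
            M.subset_indep (insert_subset_insert e (subset_insert x _)) hind2
          have hLcard : (insert e ((st.S.erase y).erase z)).card < st.S.card := by
            rw [card_insert_of_notMem heE, card_erase_of_mem hzE', card_erase_of_mem hy]
            omega
          obtain ⟨g, hg, hgL, hgind⟩ := MatroidOn.augment' hLind hinv.indep hLcard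
          have hgyz : g = y ∨ g = z := by
            by_contra hcon
            push_neg at hcon
            exact hgL (mem_insert_of_mem (mem_erase.2 ⟨hcon.2, mem_erase.2 ⟨hcon.1, hg⟩⟩))
          have hyins : insert y (insert e ((st.S.erase y).erase z)) = insert e (st.S.erase z) := by
            rw [Finset.insert_comm, Finset.erase_right_comm,
              insert_erase (mem_erase.2 ⟨hzy.symm, hy⟩)]
          have hzins : insert z (insert e ((st.S.erase y).erase z)) = insert e (st.S.erase y) := by
            rw [Finset.insert_comm, insert_erase (mem_erase.2 ⟨hzy, hzS⟩)]
          have hyC : M.Indep (insert e (st.S.erase y)) := by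
            rcases hgyz with rfl | rfl
            · exact absurd (hyins ▸ hgind) hc
            · exact hzins ▸ hgind
          have h1 : st.w e ≤ 2 * st.w y := hbound y hy hyC
          -- second augmentation: z is a legitimate swap candidate for x
          have hAind : M.Indep (st.S.erase z) :=
            M.subset_indep (erase_subset z st.S) hinv.indep
          have hAcard : (st.S.erase z).card
              < (insert e (insert x ((st.S.erase y).erase z))).card := by
            rw [card_erase_of_mem hzS, card_insert_of_notMem, card_insert_of_notMem hxE2,
              card_erase_of_mem hzE', card_erase_of_mem hy]
            · omega
            · intro h
              rcases mem_insert.1 h with h | h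
              · exact hne h
              · exact heS (erase_subset y st.S (erase_subset z _ h))
          obtain ⟨g', hg', hg'A, hg'ind⟩ := MatroidOn.augment' hAind hind2 hAcard
          have h2 : st.w y ≤ st.w z := by
            rcases mem_insert.1 hg' with rfl | hg'2
            · exact absurd hg'ind hc
            · rcases mem_insert.1 hg'2 with rfl | hg'3
              · exact hmin z hzS hg'ind
              · exact absurd (mem_erase.2
                  ⟨(mem_erase.1 hg'3).1, erase_subset y st.S (mem_erase.1 hg'3).2⟩) hg'A
          linarith
  | @discardLow y hdep hy hyind hmin hgain =>
    refine ⟨heS', hdepe, ?_⟩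
    intro z hz hind2
    have hzx : z ≠ x := fun h => hxS (h ▸ hz)
    show Function.update st.w x _ e ≤ 2 * Function.update st.w x _ z
    rw [Function.update_of_ne hne, Function.update_of_ne hzx]
    exact hbound z hz hind2
  | discardNone hdep hnone =>
    refine ⟨heS', hdepe, ?_⟩
    intro z hz hind2
    have hzx : z ≠ x := fun h => hxS (h ▸ hz)
    show Function.update st.w x _ e ≤ 2 * Function.update st.w x _ z
    rw [Function.update_of_ne hne, Function.update_of_ne hzx]
    exact hbound z hz hind2

lemma Qe_run (hmono : MonotoneFn f) (hsub : SubmodularFn f) {e : α} :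
    ∀ {st π st₂}, SwapRunFrom f M st π st₂ → ∀ P, SwapInv f M P st →
      (∀ x ∈ π, x ∉ P) → π.Nodup → e ∈ P → Qe f M e st → Qe f M e st₂ := by
  intro st π st₂ hrun
  induction hrun with
  | nil st => intro P _ _ _ _ hq; exact hq
  | @cons st st₁ st₂ x π hstep hrest ih =>
    intro P hinv hfresh hnodup heP hq
    rw [List.nodup_cons] at hnodup
    have hxP := hfresh x (List.mem_cons_self)
    have hne : e ≠ x := fun h => hxP (h ▸ heP)
    exact ih (insert x P) (inv_step hmono hsub hstep hinv hxP)
      (fun u hu => by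
        rw [Finset.mem_insert, not_or]
        exact ⟨fun h => hnodup.1 (h ▸ hu), hfresh u (List.mem_cons_of_mem x hu)⟩)
      hnodup.2 (mem_insert_of_mem heP) (Qe_step hstep hinv hxP hne hq)

lemma run_cons {st st₂ : SwapState α} {e : α} {π : List α}
    (h : SwapRunFrom f M st (e :: π) st₂) :
    ∃ st₁, SwapStep f M st e st₁ ∧ SwapRunFrom f M st₁ π st₂ := by
  cases h with
  | cons hstep hrest => exact ⟨_, hstep, hrest⟩

lemma run_append {π₁ : List α} : ∀ {st st₂ : SwapState α} {π₂ : List α},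
    SwapRunFrom f M st (π₁ ++ π₂) st₂ →
    ∃ stm, SwapRunFrom f M st π₁ stm ∧ SwapRunFrom f M stm π₂ st₂ := by
  induction π₁ with
  | nil => intro st st₂ π₂ h; exact ⟨st, SwapRunFrom.nil st, h⟩
  | cons a l ih =>
    intro st st₂ π₂ h
    cases h with
    | cons hstep hrest =>
      obtain ⟨stm, h1, h2⟩ := ih hrest
      exact ⟨stm, SwapRunFrom.cons hstep h1, h2⟩

lemma f_union_le (hsub : SubmodularFn f) (Y : Finset α) (B : Finset α) :
    f (B ∪ Y) ≤ f Y + ∑ e ∈ B \ Y, marg f Y e := by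
  induction B using Finset.induction_on with
  | empty => simp
  | @insert a B haB ih =>
    by_cases haY : a ∈ Y
    · rw [insert_union, insert_eq_self.2 (mem_union_right B haY),
        insert_sdiff_of_mem B haY]
      exact ih
    · have haBY : a ∉ B ∪ Y := by
        rw [mem_union, not_or]; exact ⟨haB, haY⟩
      have h1 : f (insert a (B ∪ Y)) - f (B ∪ Y) ≤ f (insert a Y) - f Y :=
        hsub Y (B ∪ Y) subset_union_right a haBY
      rw [insert_union, insert_sdiff_of_notMem B haY,
        sum_insert (fun h => haB (mem_sdiff.1 h).1)]
      simp only [marg] at *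
      linarith

end SwapLemmas

theorem swapping_is_four_approximation
    (f : Finset α → ℝ) (M : MatroidOn α)
    (hmono : MonotoneFn f) (hnorm : f ∅ = 0) (hsub : SubmodularFn f)
    (π : List α) (hdist : π.Nodup)
    (st : SwapState α) (hrun : SwapRun f M π st)
    (T : Finset α) (hT : ∀ x ∈ T, x ∈ π) (hTind : M.Indep T) :
    f T ≤ 4 * f st.S := by
  classical
  have hstart : SwapInv f M ∅ (SwapState.start α) := by
    refine ⟨M.empty_indep, subset_rfl, subset_rfl, fun z => le_rfl, by simp [SwapState.start, hnorm],
      by simp [SwapState.start], ?_⟩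
    intro A hA
    rw [Finset.subset_empty.1 hA]
    simp [hnorm, SwapState.start]
  have hfin : SwapInv f M (∅ ∪ π.toFinset) st :=
    inv_run hmono hsub hrun ∅ hstart (by simp) hdist
  have key : ∀ e ∈ T \ st.S', Qe f M e st ∧ marg f st.S' e ≤ st.w e := by
    intro e he0
    have heT : e ∈ T := (mem_sdiff.1 he0).1
    have heS'fin : e ∉ st.S' := (mem_sdiff.1 he0).2
    obtain ⟨π₁, π₂, rfl⟩ := List.append_of_mem (hT e heT)
    obtain ⟨stA, hrun₁, hrun₂'⟩ := run_append hrun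
    obtain ⟨stB, hstepe, hrun₂⟩ := run_cons hrun₂'
    rw [List.nodup_append] at hdist
    obtain ⟨hnd₁, hnd₂, hdisj⟩ := hdist
    rw [List.nodup_cons] at hnd₂
    have heπ₁ : e ∉ π₁ := fun h => hdisj e h e List.mem_cons_self rfl
    have hinvA : SwapInv f M π₁.toFinset stA := by
      have h := inv_run hmono hsub hrun₁ ∅ hstart (by simp) hnd₁
      simpa using h
    have heP₁ : e ∉ π₁.toFinset := by
      rw [List.mem_toFinset]; exact heπ₁
    have hinvB := inv_step hmono hsub hstepe hinvA heP₁
    have heSA' : e ∉ stA.S' := fun h => heP₁ (hinvA.subP h)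
    have heSA : e ∉ stA.S := fun h => heSA' (hinvA.sub h)
    have hfresh₂ : ∀ x ∈ π₂, x ∉ insert e π₁.toFinset := by
      intro x hx
      rw [Finset.mem_insert, not_or, List.mem_toFinset]
      exact ⟨fun h => hnd₂.1 (h ▸ hx), fun h => hdisj x h x (List.mem_cons_of_mem e hx) rfl⟩
    have hS'mono : stB.S' ⊆ st.S' := run_S'_mono hrun₂
    cases hstepe with
    | add hind =>
      exact absurd (hS'mono (mem_insert_self e stA.S')) heS'fin
    | @swap y hdep hy hyind hmin hgain =>
      exact absurd (hS'mono (mem_insert_self e stA.S')) heS'fin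
    | @discardLow y hdep hy hyind hmin hgain =>
      have hqB : Qe f M e ⟨stA.S, stA.S', Function.update stA.w e (marg f stA.S' e)⟩ := by
        refine ⟨heSA', hdep, ?_⟩
        intro z hz hind2
        have hze : z ≠ e := fun h => heSA (h ▸ hz)
        show Function.update stA.w e _ e ≤ 2 * Function.update stA.w e _ z
        rw [Function.update_self, Function.update_of_ne hze]
        push_neg at hgain
        have := hmin z hz hind2
        linarith
      have hqfin : Qe f M e st :=
        Qe_run hmono hsub hrun₂ (insert e π₁.toFinset) hinvB hfresh₂ hnd₂.2
          (mem_insert_self e _) hqB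
      have hwfin : st.w e = marg f stA.S' e := by
        rw [run_w_eq hrun₂ hnd₂.1]
        exact Function.update_self e _ stA.w
      refine ⟨hqfin, ?_⟩
      rw [hwfin]
      have hsubS' : stA.S' ⊆ st.S' := hS'mono
      have h := hsub stA.S' st.S' hsubS' e heS'fin
      simp only [marg]
      linarith
    | discardNone hdep hnone =>
      exfalso
      have he1 : M.Indep {e} := by
        apply M.subset_indep _ hTind
        intro u hu
        rw [Finset.mem_singleton] at hu
        exact hu ▸ heT
      obtain ⟨z, hz, hzi⟩ := MatroidOn.exists_swap hinvA.indep he1 heSA hdep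
      exact hnone z hz hzi
  have hRind : M.Indep (T \ st.S') := M.subset_indep sdiff_subset hTind
  have hRdisj : ∀ e ∈ T \ st.S', e ∉ st.S := fun e he h => (mem_sdiff.1 he).2 (hfin.sub h)
  have hRdep : ∀ e ∈ T \ st.S', ¬ M.Indep (insert e st.S) := fun e he => ((key e he).1).2.1
  obtain ⟨φ, hφinj, hφ⟩ := MatroidOn.exists_representatives hfin.indep hRind hRdisj hRdep
  have hsum1 : ∑ e ∈ T \ st.S', marg f st.S' e ≤ ∑ e ∈ T \ st.S', 2 * st.w (φ e) := by
    apply sum_le_sum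
    intro e he
    have h1 := (key e he).2
    have h2 := ((key e he).1).2.2 (φ e) (hφ e he).1 (hφ e he).2
    linarith
  have hsum2 : ∑ e ∈ T \ st.S', st.w (φ e) ≤ ∑ z ∈ st.S, st.w z := by
    have himg : ∑ z ∈ (T \ st.S').image φ, st.w z = ∑ e ∈ T \ st.S', st.w (φ e) :=
      Finset.sum_image (fun u hu v hv h => hφinj (Finset.mem_coe.2 hu) (Finset.mem_coe.2 hv) h)
    rw [← himg]
    apply sum_le_sum_of_subset_of_nonneg
    · intro z hz
      obtain ⟨e, he, rfl⟩ := mem_image.1 hz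
      exact (hφ e he).1
    · intro z _ _
      exact hfin.wnn z
  have hsum1' : ∑ e ∈ T \ st.S', marg f st.S' e ≤ 2 * ∑ e ∈ T \ st.S', st.w (φ e) := by
    rw [Finset.mul_sum]
    exact hsum1
  have hchain := f_union_le hsub st.S' T
  have hmono1 : f T ≤ f (T ∪ st.S') := hmono _ _ subset_union_left
  have hlowS : ∑ z ∈ st.S, st.w z ≤ f st.S := hfin.lower st.S hfin.sub
  have hweq := hfin.weq
  have hhalf := hfin.half
  linarith
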